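/- arXiv:1808.05918 — 4 statements merged into one kernel-verified Lean document; each statement's English description precedes it below -/
import Mathlib

section
/- If [z,x] is a length-two Bruhat interval in a Coxeter group W with the two intermediate elements y and ỹ, and z = r_α y = r_γ ỹ, x = r_β y = r_δ ỹ for reflections r_α, r_β, r_γ, r_δ, then r_γ and r_δ lie in the reflection subgroup generated by r_α and r_β. -/
/-!
Induct on `ℓ x`, choosing a simple reflection `s` with `x s < x`. If neither atom is `x s`,
right multiplication by `s` maps the diamond onto the shorter diamond `[z s, x s]`, which has
the same four reflections. If `y = x s`, the strong exchange condition gives either `z = ỹ s`,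
where the claim is a direct computation, or `z s < z`; then `[z s, y]` is a shorter diamond with
atoms `z`, `ỹ s` and reflections `z s z⁻¹ = r_α r_β r_α`, `r_α`, `r_γ`, `r_δ`. Strong exchange
itself comes from Tits' sign representation of `W` on `W × {±1}`.
-/

open Relation

variable {B : Type*}

/-- One step in the Bruhat order of a Coxeter group: multiply on the right by a
reflection, increasing the length. The Bruhat order is the reflexive-transitive
closure of this relation. -/
def BruhatStep {W : Type*} [Group W] {M : CoxeterMatrix B} (cs : CoxeterSystem M W)
    (a b : W) : Prop :=
  ∃ t : W, cs.IsReflection t ∧ b = a * t ∧ cs.length a < cs.length b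

/-- The Bruhat order on a Coxeter group. -/
def BruhatLE {W : Type*} [Group W] {M : CoxeterMatrix B} (cs : CoxeterSystem M W)
    (a b : W) : Prop :=
  Relation.ReflTransGen (BruhatStep cs) a b

/-- The strict Bruhat order on a Coxeter group. -/
def BruhatLT {W : Type*} [Group W] {M : CoxeterMatrix B} (cs : CoxeterSystem M W)
    (a b : W) : Prop :=
  BruhatLE cs a b ∧ a ≠ b

theorem mul_mul_inv_eq_iff_eq_inv_mul_mul {G : Type*} [Group G] {g t u : G} :
    g * t * g⁻¹ = u ↔ t = g⁻¹ * u * g := by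
  constructor <;> rintro rfl <;> group

theorem Subgroup.closure_pair_conj_inv {G : Type*} [Group G] (a b : G) :
    Subgroup.closure {a * b⁻¹ * a⁻¹, a} = Subgroup.closure {a, b} := by
  apply le_antisymm <;> rw [Subgroup.closure_le, Set.insert_subset_iff, Set.singleton_subset_iff]
  · have ha : a ∈ Subgroup.closure {a, b} := Subgroup.subset_closure (by simp)
    have hb : b ∈ Subgroup.closure {a, b} := Subgroup.subset_closure (by simp)
    exact ⟨mul_mem (mul_mem ha (inv_mem hb)) (inv_mem ha), ha⟩
  · have hc : a * b⁻¹ * a⁻¹ ∈ Subgroup.closure {a * b⁻¹ * a⁻¹, a} :=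
      Subgroup.subset_closure (by simp)
    have ha : a ∈ Subgroup.closure {a * b⁻¹ * a⁻¹, a} := Subgroup.subset_closure (by simp)
    refine ⟨ha, ?_⟩
    simpa [mul_assoc] using inv_mem (mul_mem (mul_mem (inv_mem ha) hc) ha)

namespace CoxeterSystem

variable {W : Type*} [Group W] {M : CoxeterMatrix B} (cs : CoxeterSystem M W)

local prefix:100 "s " => cs.simple
local prefix:100 "π " => cs.wordProd
local prefix:100 "ℓ " => cs.length
local prefix:100 "ris " => cs.rightInvSeq
local prefix:100 "lis " => cs.leftInvSeq

section SignRepresentation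

open scoped Classical

noncomputable def simpleSignPerm (i : B) : Equiv.Perm (W × ℤˣ) :=
  Equiv.prodShear (MulAut.conj (s i)).toEquiv
    fun t => Equiv.mulLeft (if t = s i then -1 else 1)

theorem simpleSignPerm_apply (i : B) (t : W) (ε : ℤˣ) :
    cs.simpleSignPerm i (t, ε) = (s i * t * s i, (if t = s i then -1 else 1) * ε) := by
  simp [simpleSignPerm, cs.inv_simple]

theorem inv_pow_simple_mul_simple_mul_simple (i j : B) (q : ℕ) :
    ((s i * s j) ^ q)⁻¹ * s j = s j * (s i * s j) ^ q := by
  have h : SemiconjBy (s j) (s i * s j) (s j * s i) := by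
    simp [SemiconjBy, mul_assoc]
  rw [(h.pow_right q).eq, ← inv_pow, mul_inv_rev, cs.inv_simple, cs.inv_simple]

theorem simpleSignPerm_mul_pow_apply (i j : B) (q : ℕ) (t : W) (ε : ℤˣ) :
    ((cs.simpleSignPerm i * cs.simpleSignPerm j) ^ q) (t, ε) =
      ((s i * s j) ^ q * t * ((s i * s j) ^ q)⁻¹,
        (∏ k ∈ Finset.range (2 * q), if t = s j * (s i * s j) ^ k then -1 else 1) * ε) := by
  induction q with
  | zero => simp
  | succ q ih =>
    set g := s i * s j
    have hconj : (g ^ q)⁻¹ * s j * g ^ q = s j * g ^ (2 * q) := by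
      rw [cs.inv_pow_simple_mul_simple_mul_simple, mul_assoc, ← pow_add, two_mul]
    have hj_iff : g ^ q * t * (g ^ q)⁻¹ = s j ↔ t = s j * g ^ (2 * q) := by
      rw [mul_mul_inv_eq_iff_eq_inv_mul_mul, hconj]
    have hi_iff : s j * (g ^ q * t * (g ^ q)⁻¹) * s j = s i ↔ t = s j * g ^ (2 * q + 1) := by
      have hsj := mul_mul_inv_eq_iff_eq_inv_mul_mul (g := s j) (t := g ^ q * t * (g ^ q)⁻¹)
        (u := s i)
      rw [cs.inv_simple] at hsj
      have hconj' : (g ^ q)⁻¹ * (s j * s i * s j) * g ^ q = s j * g ^ (2 * q + 1) :=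
        calc (g ^ q)⁻¹ * (s j * s i * s j) * g ^ q
            = (g ^ q)⁻¹ * s j * (g * g ^ q) := by simp only [g, mul_assoc]
          _ = (g ^ q)⁻¹ * s j * g ^ q * g := by
            rw [← pow_succ', pow_succ]; simp only [mul_assoc]
          _ = s j * g ^ (2 * q + 1) := by rw [hconj, mul_assoc, ← pow_succ]
      rw [hsj, mul_mul_inv_eq_iff_eq_inv_mul_mul, hconj']
    rw [pow_succ', Equiv.Perm.mul_apply, Equiv.Perm.mul_apply, ih, simpleSignPerm_apply,
      simpleSignPerm_apply, hj_iff, hi_iff, show 2 * (q + 1) = 2 * q + 1 + 1 by ring,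
      Finset.prod_range_succ, Finset.prod_range_succ]
    congr 1
    · simp only [g, pow_succ', mul_inv_rev, cs.inv_simple, mul_assoc]
    · dsimp only
      ac_rfl

theorem isLiftable_simpleSignPerm : M.IsLiftable cs.simpleSignPerm := by
  intro i j
  ext ⟨t, ε⟩ : 1
  have hm : (s i * s j) ^ M i j = 1 := cs.simple_mul_simple_pow i j
  have hsigns : (∏ k ∈ Finset.range (2 * M i j),
      if t = s j * (s i * s j) ^ k then (-1 : ℤˣ) else 1) = 1 := by
    rw [two_mul, Finset.prod_range_add, ← Finset.prod_mul_distrib]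
    refine Finset.prod_eq_one fun k _ => ?_
    rw [pow_add, hm, one_mul]
    exact Int.units_mul_self _
  rw [cs.simpleSignPerm_mul_pow_apply, hm, hsigns]
  simp

noncomputable def signRep : W →* Equiv.Perm (W × ℤˣ) :=
  cs.lift ⟨cs.simpleSignPerm, cs.isLiftable_simpleSignPerm⟩

theorem signRep_simple (i : B) : cs.signRep (s i) = cs.simpleSignPerm i :=
  cs.lift_apply_simple cs.isLiftable_simpleSignPerm i

-- Since the left side depends only on `π ω`, so does the parity of `t` in `ris ω`.
theorem signRep_wordProd (ω : List B) (t : W) (ε : ℤˣ) :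
    cs.signRep (π ω) (t, ε) = (π ω * t * (π ω)⁻¹, (-1) ^ (ris ω).count t * ε) := by
  induction ω using List.reverseRecOn generalizing t ε with
  | nil => simp
  | append_singleton ω i ih =>
    have hcount : (ris (ω ++ [i])).count t
        = (ris ω).count (s i * t * s i) + if t = s i then 1 else 0 := by
      rw [← List.concat_eq_append, cs.rightInvSeq_concat, List.concat_eq_append,
        List.count_append, List.count_singleton]
      have ht : t = MulAut.conj (s i) (s i * t * s i) := by
        simp [mul_assoc, cs.inv_simple]
      congr 1
      · conv_lhs => rw [ht]
        exact List.count_map_of_injective _ _ (MulAut.conj (s i)).injective _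
      · simp only [beq_iff_eq, @eq_comm _ (s i)]
    rw [cs.wordProd_append, cs.wordProd_singleton, map_mul, Equiv.Perm.mul_apply, signRep_simple,
      simpleSignPerm_apply, ih, hcount]
    congr 1
    · simp only [mul_inv_rev, cs.inv_simple, mul_assoc]
    · split_ifs <;> simp [pow_succ]

theorem signRep_apply (w t : W) (ε : ℤˣ) :
    cs.signRep w (t, ε) = (w * t * w⁻¹, (cs.signRep w (t, 1)).2 * ε) := by
  obtain ⟨ω, rfl⟩ := cs.wordProd_surjective w
  simp [signRep_wordProd]

theorem signRep_self {t : W} (ht : cs.IsReflection t) (ε : ℤˣ) :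
    cs.signRep t (t, ε) = (t, -ε) := by
  obtain ⟨u, i, rfl⟩ := ht
  set c := (cs.signRep u⁻¹ (u * s i * u⁻¹, 1)).2
  have hdown (δ : ℤˣ) : cs.signRep u⁻¹ (u * s i * u⁻¹, δ) = (s i, c * δ) := by
    rw [signRep_apply, show u⁻¹ * (u * s i * u⁻¹) * u⁻¹⁻¹ = s i by group]
  have hcancel : (cs.signRep u (s i, 1)).2 * c = 1 := by
    have h := congrArg (fun w => cs.signRep w (u * s i * u⁻¹, 1)) (mul_inv_cancel u)
    simp only [map_mul, Equiv.Perm.mul_apply, map_one, Equiv.Perm.one_apply] at h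
    rw [hdown, mul_one, signRep_apply] at h
    exact congrArg Prod.snd h
  rw [map_mul, map_mul, Equiv.Perm.mul_apply, Equiv.Perm.mul_apply, hdown, signRep_simple,
    simpleSignPerm_apply, if_pos rfl, cs.simple_mul_simple_cancel_right, signRep_apply,
    mul_left_comm, ← mul_assoc _ c, hcancel]
  simp

-- The strong exchange condition, for words that need not be reduced.
theorem mem_rightInvSeq_of_isRightInversion {ω : List B} {t : W}
    (ht : cs.IsRightInversion (π ω) t) : t ∈ ris ω := by
  obtain ⟨ω', hω', hprod'⟩ := cs.exists_isReduced (π ω * t)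
  have hnot : t ∉ ris ω' := fun hmem => by
    have hlt := (cs.isRightInversion_of_mem_rightInvSeq hω' hmem).2
    rw [← hprod', mul_assoc, ht.1.mul_self, mul_one] at hlt
    exact lt_asymm hlt ht.2
  have hsign : (cs.signRep (π ω) (t, 1)).2 = -1 := by
    have h : cs.signRep (π ω) (t, 1) = cs.signRep (π ω') (t, -1) := by
      rw [← signRep_self cs ht.1, ← Equiv.Perm.mul_apply, ← map_mul, ← hprod', mul_assoc,
        ht.1.mul_self, mul_one]
    rw [h, signRep_wordProd, List.count_eq_zero.mpr hnot, pow_zero, one_mul]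
  simp only [signRep_wordProd, mul_one] at hsign
  by_contra hmem
  rw [List.count_eq_zero.mpr hmem, pow_zero] at hsign
  exact absurd hsign (by decide)

theorem mem_leftInvSeq_of_isLeftInversion {ω : List B} {t : W}
    (ht : cs.IsLeftInversion (π ω) t) : t ∈ lis ω := by
  rw [← cs.isRightInversion_inv_iff, ← wordProd_reverse] at ht
  have hmem := cs.mem_rightInvSeq_of_isRightInversion ht
  rwa [rightInvSeq_reverse, List.mem_reverse] at hmem

end SignRepresentation

theorem eq_mul_simple_or_length_mul_simple_add_two_le {w u : W} {i : B}
    (hi : cs.IsRightDescent w i) (hu : cs.IsReflection (u * w⁻¹)) (hlt : ℓ u < ℓ w) :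
    u = w * s i ∨ ℓ (u * s i) + 2 ≤ ℓ w := by
  obtain ⟨ω, hω, hωw⟩ := cs.exists_isReduced (w * s i)
  have hw : w = π (ω.concat i) := by
    rw [wordProd_concat, ← hωw, cs.simple_mul_simple_cancel_right]
  have hinv : cs.IsLeftInversion (π (ω.concat i)) (u * w⁻¹) :=
    ⟨hu, by rwa [← hw, inv_mul_cancel_right]⟩
  have hmem := cs.mem_leftInvSeq_of_isLeftInversion hinv
  rw [leftInvSeq_concat, List.concat_eq_append, List.mem_append, List.mem_singleton] at hmem
  rcases hmem with hmem | heq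
  · right
    obtain ⟨j, hj, hjt⟩ := List.mem_iff_getElem.mp hmem
    have herase := cs.getD_leftInvSeq_mul_wordProd ω j
    rw [List.getD_eq_getElem _ 1 hj, hjt, ← hωw, ← mul_assoc, inv_mul_cancel_right] at herase
    have hle := cs.length_wordProd_le (ω.eraseIdx j)
    rw [← herase, List.length_eraseIdx_of_lt (by simpa using hj)] at hle
    rw [length_leftInvSeq] at hj
    rw [IsReduced, ← hωw] at hω
    have := cs.isRightDescent_iff.mp hi
    omega
  · left
    rw [← hωw] at heq
    calc u = u * w⁻¹ * w := by group
      _ = w * s i := by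
        rw [heq, mul_inv_rev, cs.inv_simple]
        simp only [mul_assoc, cs.simple_mul_simple_cancel_left, inv_mul_cancel, mul_one]

theorem eq_mul_simple_or_isRightDescent {w u : W} {i : B} (hi : cs.IsRightDescent w i)
    (hu : cs.IsReflection (u * w⁻¹)) (hlen : ℓ u + 1 = ℓ w) :
    u = w * s i ∨ cs.IsRightDescent u i :=
  (cs.eq_mul_simple_or_length_mul_simple_add_two_le hi hu (by omega)).imp_right
    fun h => by rw [IsRightDescent]; omega

structure IsDiamond (z y y' x : W) : Prop where
  left_ne_right : y ≠ y'
  length_left : ℓ y = ℓ z + 1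
  length_right : ℓ y' = ℓ z + 1
  length_top : ℓ x = ℓ z + 2
  isReflection_bot_left : cs.IsReflection (z * y⁻¹)
  isReflection_left_top : cs.IsReflection (y * x⁻¹)
  isReflection_bot_right : cs.IsReflection (z * y'⁻¹)
  isReflection_right_top : cs.IsReflection (y' * x⁻¹)

namespace IsDiamond

variable {cs} {z y y' x : W}

theorem symm (h : cs.IsDiamond z y y' x) : cs.IsDiamond z y' y x :=
  ⟨h.left_ne_right.symm, h.length_right, h.length_left, h.length_top, h.isReflection_bot_right,
    h.isReflection_right_top, h.isReflection_bot_left, h.isReflection_left_top⟩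

theorem top_ne_one (h : cs.IsDiamond z y y' x) : x ≠ 1 := by
  rintro rfl
  have := h.length_top
  simp at this

theorem mul_simple (h : cs.IsDiamond z y y' x) {i : B} (hi : cs.IsRightDescent x i)
    (hy : y ≠ x * s i) (hy' : y' ≠ x * s i) :
    cs.IsDiamond (z * s i) (y * s i) (y' * s i) (x * s i) := by
  have hyi := (cs.eq_mul_simple_or_isRightDescent hi h.isReflection_left_top
    (by rw [h.length_left, h.length_top])).resolve_left hy
  have hy'i := (cs.eq_mul_simple_or_isRightDescent hi h.isReflection_right_top
    (by rw [h.length_right, h.length_top])).resolve_left hy'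
  have hzi : cs.IsRightDescent z i := by
    by_contra hz
    have hzy := (cs.eq_mul_simple_or_isRightDescent hyi h.isReflection_bot_left
      h.length_left.symm).resolve_right hz
    have hzy' := (cs.eq_mul_simple_or_isRightDescent hy'i h.isReflection_bot_right
      h.length_right.symm).resolve_right hz
    exact h.left_ne_right (mul_right_cancel (hzy.symm.trans hzy'))
  rw [cs.isRightDescent_iff] at hi hyi hy'i hzi
  have hcancel (u v : W) : u * s i * (v * s i)⁻¹ = u * v⁻¹ := by group
  obtain ⟨hne, hly, hly', hlx, ha, hb, hc, hd⟩ := h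
  exact ⟨fun he => hne (mul_right_cancel he), by omega, by omega, by omega,
    hcancel z y ▸ ha, hcancel y x ▸ hb, hcancel z y' ▸ hc, hcancel y' x ▸ hd⟩

-- The inductive step when the atom `y` is `x s`: `ih` is the claim for the shorter diamond
-- `[z s, y]`, which is needed unless `z = y' s`.
theorem closure_eq_of_top_eq_mul_simple (h : cs.IsDiamond z y y' x) {i : B} (hx : x = y * s i)
    (ih : cs.IsDiamond (z * s i) z (y' * s i) y →
      Subgroup.closure {z * s i * z⁻¹, z * y⁻¹} =
        Subgroup.closure {z * s i * (y' * s i)⁻¹, y' * s i * y⁻¹}) :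
    Subgroup.closure {z * y⁻¹, y * x⁻¹} = Subgroup.closure {z * y'⁻¹, y' * x⁻¹} := by
  subst hx
  have hly := h.length_left
  have hly' := h.length_right
  have hlx := h.length_top
  have hi : cs.IsRightDescent (y * s i) i := by
    rw [IsRightDescent, cs.simple_mul_simple_cancel_right]; omega
  have hy'i : cs.IsRightDescent y' i :=
    (cs.eq_mul_simple_or_isRightDescent hi h.isReflection_right_top (by omega)).resolve_left
      fun he => h.left_ne_right (he.trans (cs.simple_mul_simple_cancel_right i)).symm
  have hconj : Subgroup.closure {z * y⁻¹, y * (y * s i)⁻¹} =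
      Subgroup.closure {z * s i * z⁻¹, z * y⁻¹} := by
    rw [← Subgroup.closure_pair_conj_inv,
      show z * y⁻¹ * (y * (y * s i)⁻¹)⁻¹ * (z * y⁻¹)⁻¹ = z * s i * z⁻¹ by group]
  rw [hconj]
  rcases cs.eq_mul_simple_or_isRightDescent hy'i h.isReflection_bot_right hly'.symm with hz | hzi
  · subst hz
    simp only [mul_inv_rev, cs.inv_simple, mul_assoc, cs.simple_mul_simple_cancel_left]
  · rw [cs.isRightDescent_iff] at hy'i hzi
    have hd : cs.IsDiamond (z * s i) z (y' * s i) y := by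
      refine ⟨fun he => ?_, by omega, by omega, by omega, ⟨z, i, rfl⟩, h.isReflection_bot_left,
        ?_, ?_⟩
      · rw [he, cs.simple_mul_simple_cancel_right] at hzi
        omega
      · simpa only [mul_inv_rev, cs.inv_simple, mul_assoc, cs.simple_mul_simple_cancel_left]
          using h.isReflection_bot_right
      · simpa only [mul_inv_rev, cs.inv_simple, mul_assoc] using h.isReflection_right_top
    rw [ih hd]
    simp only [mul_inv_rev, cs.inv_simple, mul_assoc, cs.simple_mul_simple_cancel_left]

theorem closure_eq (h : cs.IsDiamond z y y' x) :
    Subgroup.closure {z * y⁻¹, y * x⁻¹} = Subgroup.closure {z * y'⁻¹, y' * x⁻¹} := by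
  induction hn : ℓ x using Nat.strong_induction_on generalizing z y y' x with
  | _ n ih =>
  have hly := h.length_left
  have hly' := h.length_right
  have hlx := h.length_top
  obtain ⟨i, hi⟩ := cs.exists_rightDescent_of_ne_one h.top_ne_one
  by_cases hy : y = x * s i
  · have hx : x = y * s i := by rw [hy, cs.simple_mul_simple_cancel_right]
    exact h.closure_eq_of_top_eq_mul_simple hx fun hd => ih _ (by omega) hd rfl
  by_cases hy' : y' = x * s i
  · have hx : x = y' * s i := by rw [hy', cs.simple_mul_simple_cancel_right]
    exact (h.symm.closure_eq_of_top_eq_mul_simple hx fun hd => ih _ (by omega) hd rfl).symm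
  have hxi := cs.isRightDescent_iff.mp hi
  simpa only [mul_inv_rev, cs.inv_simple, mul_assoc, cs.simple_mul_simple_cancel_left] using
    ih _ (by omega) (h.mul_simple hi hy hy') rfl

end IsDiamond

end CoxeterSystem

theorem BruhatLE.length_le {W : Type*} [Group W] {M : CoxeterMatrix B} {cs : CoxeterSystem M W}
    {a b : W} (h : BruhatLE cs a b) : cs.length a ≤ cs.length b := by
  induction h with
  | refl => exact le_rfl
  | tail _ hstep ih =>
    obtain ⟨t, -, rfl, hlt⟩ := hstep
    omega

theorem BruhatLT.length_lt {W : Type*} [Group W] {M : CoxeterMatrix B} {cs : CoxeterSystem M W}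
    {a b : W} (h : BruhatLT cs a b) : cs.length a < cs.length b := by
  rcases h.1.cases_tail with rfl | ⟨c, hac, t, -, rfl, hlt⟩
  · exact absurd rfl h.2
  · exact (BruhatLE.length_le hac).trans_lt hlt

/-- If `[z,x]` is a length-two Bruhat interval with the two intermediate
elements `y` and `ỹ`, and `z = r_α y = r_γ ỹ`, `x = r_β y = r_δ ỹ` for reflections
`r_α, r_β, r_γ, r_δ`, then `r_γ` and `r_δ` lie in the (reflection) subgroup generated by
`r_α` and `r_β`. -/
theorem middle_reflections_in_dihedral_subgroup
    {W : Type*} [Group W] {M : CoxeterMatrix B} (cs : CoxeterSystem M W)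
    (z y ytilde x : W)
    (hlen : cs.length x = cs.length z + 2)
    (hzy : BruhatLT cs z y) (hyx : BruhatLT cs y x)
    (hzyt : BruhatLT cs z ytilde) (hytx : BruhatLT cs ytilde x)
    (hne : y ≠ ytilde)
    (ra rb rc rd : W)
    (hra : cs.IsReflection ra) (hrb : cs.IsReflection rb)
    (hrc : cs.IsReflection rc) (hrd : cs.IsReflection rd)
    (hz1 : z = ra * y) (hx1 : x = rb * y)
    (hz2 : z = rc * ytilde) (hx2 : x = rd * ytilde) :
    rc ∈ Subgroup.closure {ra, rb} ∧ rd ∈ Subgroup.closure {ra, rb} := by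
  have := hzy.length_lt
  have := hyx.length_lt
  have := hzyt.length_lt
  have := hytx.length_lt
  have ha : z * y⁻¹ = ra := by rw [hz1, mul_inv_cancel_right]
  have hb : y * x⁻¹ = rb := by rw [hx1, mul_inv_rev, mul_inv_cancel_left, hrb.inv]
  have hc : z * ytilde⁻¹ = rc := by rw [hz2, mul_inv_cancel_right]
  have hd : ytilde * x⁻¹ = rd := by rw [hx2, mul_inv_rev, mul_inv_cancel_left, hrd.inv]
  have hdiamond : cs.IsDiamond z y ytilde x :=
    ⟨hne, by omega, by omega, hlen, ha ▸ hra, hb ▸ hrb, hc ▸ hrc, hd ▸ hrd⟩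
  have hclosure := hdiamond.closure_eq
  rw [ha, hb, hc, hd] at hclosure
  rw [hclosure]
  exact ⟨Subgroup.subset_closure (by simp), Subgroup.subset_closure (by simp)⟩
end

section
/- Let w ∈ S_n be a Grassmannian permutation with unique descent at k, and let v_P(w) = w w₀^P be the maximal coset representative of wW_P. Then the coessential set Coess(v_P(w)) equals {(i,k) : w⁻¹(i) ≤ k < w⁻¹(i+1)}, and for each such pair, the rank number r_{i,k}(v_P(w)) = #{j ≤ k : v_P(w)(j) ≤ i} equals w⁻¹(i). -/
open Equiv

/-- `w` is a Grassmannian permutation of `{1, …, n}` with unique descent at `k`: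
`w` fixes everything outside `[1, n]`, is increasing on `[1, k]` and on `[k+1, n]`,
and has a descent at `k`. -/
def IsGrassmannian (n k : ℕ) (w : Equiv.Perm ℕ) : Prop :=
  (∀ i, i ∉ Set.Icc 1 n → w i = i) ∧
  (∀ i j, 1 ≤ i → i < j → j ≤ k → w i < w j) ∧
  (∀ i j, k + 1 ≤ i → i < j → j ≤ n → w i < w j) ∧
  w (k + 1) < w k

/-- The rank number `r_{p,q}(v) = #{j ≤ q : v(j) ≤ p}`. -/
def rankNum (v : Equiv.Perm ℕ) (p q : ℕ) : ℕ :=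
  ((Finset.Icc 1 q).filter (fun j => v j ≤ p)).card

/-- Fulton's coessential set of a permutation of `{1, …, n}`:
`Coess(v) = {(p,q) : v⁻¹(p) ≤ q < v⁻¹(p+1) and v(q) ≤ p < v(q+1)}`,
with `1 ≤ p, q ≤ n - 1`. -/
def Coess (n : ℕ) (v : Equiv.Perm ℕ) : Set (ℕ × ℕ) :=
  {pq | 1 ≤ pq.1 ∧ pq.1 < n ∧ 1 ≤ pq.2 ∧ pq.2 < n ∧
    v⁻¹ pq.1 ≤ pq.2 ∧ pq.2 < v⁻¹ (pq.1 + 1) ∧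
    v pq.2 ≤ pq.1 ∧ pq.1 < v (pq.2 + 1)}

/-- The parabolic subgroup of permutations generated by the adjacent transpositions
`(j, j+1)` for `j ∈ S`. -/
def permParabolic (S : Set ℕ) : Subgroup (Equiv.Perm ℕ) :=
  Subgroup.closure ((fun j => Equiv.swap j (j + 1)) '' S)

/-- `v` is the maximal length representative of the coset `w · W_S`: it lies in the
coset and has a descent at every position of `S`. -/
def IsMaxRep (S : Set ℕ) (w v : Equiv.Perm ℕ) : Prop :=
  (∃ u ∈ permParabolic S, v = w * u) ∧ ∀ j ∈ S, v (j + 1) < v j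

/-- The positions of the simple roots generating the maximal parabolic `P` with
`W_P = S_k × S_{n-k}`. -/
def SP (n k : ℕ) : Set ℕ := {j | 1 ≤ j ∧ j < n ∧ j ≠ k}

/-- The positions `j` of the simple roots `α_j ∈ Δ_w = {α_j : w(j+1) = w(j)+1, j ≠ k}`
generating the parabolic subgroup `Q`. -/
def DeltaW (n k : ℕ) (w : Equiv.Perm ℕ) : Set ℕ :=
  {j | 1 ≤ j ∧ j < n ∧ j ≠ k ∧ w (j + 1) = w j + 1}

/-!
Write `v = w u` with `u ∈ W_P`. Every generator of `W_P` preserves the initial segments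
`{i ≤ c}` for `c ∈ {0, k, n}`, so `u` permutes the blocks `[1, k]` and `[k+1, n]`. Hence
`v⁻¹ p ≤ k ↔ w⁻¹ p ≤ k`, and `r_{p,k}(v) = r_{p,k}(w)`, which counts an initial segment of the
increasing block `w(1) < ⋯ < w(k)`. Since `v` descends at every `j ≠ k`, a coessential box sits
in column `k`; and as `v` is decreasing on each block while `w` is increasing there,
`v(k) = w(1)` and `v(k+1) = w(n)`, which gives the remaining conditions on `(p, k)`.
-/

theorem le_iff_of_mem_permParabolic {S : Set ℕ} {c : ℕ} (hc : c ∉ S) {u : Perm ℕ}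
    (hu : u ∈ permParabolic S) (i : ℕ) : u i ≤ c ↔ i ≤ c := by
  induction hu using Subgroup.closure_induction generalizing i with
  | mem x hx =>
    obtain ⟨j, hj, rfl⟩ := hx
    have hjc : j ≠ c := fun h => hc (h ▸ hj)
    rcases eq_or_ne i j with rfl | hij
    · rw [swap_apply_left]; omega
    rcases eq_or_ne i (j + 1) with rfl | hij'
    · rw [swap_apply_right]; omega
    · rw [swap_apply_of_ne_of_ne hij hij']
  | one => rfl
  | mul x y _ _ hx hy => exact (hx (y i)).trans (hy i)
  | inv x _ hx => simpa using (hx (x⁻¹ i)).symm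

theorem mem_Icc_iff_of_mem_permParabolic {S : Set ℕ} {a b : ℕ} (ha : a ∉ S) (hb : b ∉ S)
    {u : Perm ℕ} (hu : u ∈ permParabolic S) (i : ℕ) :
    u i ∈ Set.Icc (a + 1) b ↔ i ∈ Set.Icc (a + 1) b := by
  have := le_iff_of_mem_permParabolic ha hu i
  have := le_iff_of_mem_permParabolic hb hu i
  simp only [Set.mem_Icc]
  omega

theorem Equiv.Perm.inv_apply_mem_of_forall_notMem {α : Type*} {s : Set α} {w : Perm α}
    (h : ∀ i ∉ s, w i = i) {p : α} (hp : p ∈ s) : w⁻¹ p ∈ s := by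
  by_contra hc
  have hw : w (w⁻¹ p) = p := w.apply_symm_apply p
  exact hc (by rwa [← h _ hc, hw])

section Extremal

variable {α β : Type*} [Preorder α] [PartialOrder β] {g : α → β} {u : Perm α} {a b : α}

theorem apply_right_eq_of_antitoneOn_comp (hab : a ≤ b)
    (hu : ∀ i, u i ∈ Set.Icc a b ↔ i ∈ Set.Icc a b) (hg : MonotoneOn g (Set.Icc a b))
    (hgu : AntitoneOn (g ∘ u) (Set.Icc a b)) : g (u b) = g a := by
  have hb : b ∈ Set.Icc a b := Set.right_mem_Icc.2 hab
  have ha : u⁻¹ a ∈ Set.Icc a b := (hu _).1 (by simpa using Set.left_mem_Icc.2 hab)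
  refine le_antisymm ?_ (hg (Set.left_mem_Icc.2 hab) ((hu b).2 hb) ((hu b).2 hb).1)
  simpa using hgu ha hb ha.2

theorem apply_left_eq_of_antitoneOn_comp (hab : a ≤ b)
    (hu : ∀ i, u i ∈ Set.Icc a b ↔ i ∈ Set.Icc a b) (hg : MonotoneOn g (Set.Icc a b))
    (hgu : AntitoneOn (g ∘ u) (Set.Icc a b)) : g (u a) = g b := by
  have ha : a ∈ Set.Icc a b := Set.left_mem_Icc.2 hab
  have hb : u⁻¹ b ∈ Set.Icc a b := (hu _).1 (by simpa using Set.right_mem_Icc.2 hab)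
  refine le_antisymm (hg ((hu a).2 ha) (Set.right_mem_Icc.2 hab) ((hu a).2 ha).2) ?_
  simpa using hgu ha hb hb.1

end Extremal

theorem card_filter_le_apply_of_strictMonoOn {β : Type*} [LinearOrder β] {g : ℕ → β}
    {k m : ℕ} (hg : StrictMonoOn g (Set.Icc 1 k)) (hm : m ∈ Set.Icc 1 k) :
    ((Finset.Icc 1 k).filter (fun j => g j ≤ g m)).card = m := by
  have hfilter : (Finset.Icc 1 k).filter (fun j => g j ≤ g m) = Finset.Icc 1 m := by
    ext j
    simp only [Finset.mem_filter, Finset.mem_Icc]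
    constructor
    · rintro ⟨hj, hjm⟩
      exact ⟨hj.1, (hg.le_iff_le hj hm).1 hjm⟩
    · rintro ⟨hj, hjm⟩
      exact ⟨⟨hj, hjm.trans hm.2⟩, (hg.le_iff_le ⟨hj, hjm.trans hm.2⟩ hm).2 hjm⟩
  rw [hfilter, Nat.card_Icc, Nat.add_sub_cancel]

theorem rankNum_mul_of_forall_mem_Icc_iff {w u : Perm ℕ} {k : ℕ}
    (hu : ∀ i, u i ∈ Set.Icc 1 k ↔ i ∈ Set.Icc 1 k) (p : ℕ) :
    rankNum (w * u) p k = rankNum w p k := by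
  have himage : (Finset.Icc 1 k).map u.toEmbedding = Finset.Icc 1 k := by
    ext i
    simpa [Finset.mem_map_equiv] using (hu (u⁻¹ i)).symm
  unfold rankNum
  conv_rhs => rw [← himage, Finset.filter_map, Finset.card_map]
  rfl

theorem antitoneOn_Icc_of_lt {v : ℕ → ℕ} {a b : ℕ}
    (h : ∀ j, a ≤ j → j < b → v (j + 1) < v j) : AntitoneOn v (Set.Icc a b) :=
  antitoneOn_of_add_one_le Set.ordConnected_Icc fun j _ hj hj' => (h j hj.1 hj'.2).le

section Grassmannian

variable {n k : ℕ} {w u v : Perm ℕ}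

theorem IsGrassmannian.strictMonoOn_Icc_left (hG : IsGrassmannian n k w) :
    StrictMonoOn w (Set.Icc 1 k) :=
  fun i hi j hj hij => hG.2.1 i j hi.1 hij hj.2

theorem IsGrassmannian.strictMonoOn_Icc_right (hG : IsGrassmannian n k w) :
    StrictMonoOn w (Set.Icc (k + 1) n) :=
  fun i hi j hj hij => hG.2.2.1 i j hi.1 hij hj.2

theorem IsGrassmannian.inv_apply_mem_Icc (hG : IsGrassmannian n k w) {p : ℕ}
    (hp : p ∈ Set.Icc 1 n) : w⁻¹ p ∈ Set.Icc 1 n :=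
  Perm.inv_apply_mem_of_forall_notMem hG.1 hp

theorem IsGrassmannian.rankNum_inv_apply (hG : IsGrassmannian n k w) {p : ℕ}
    (hp : w⁻¹ p ∈ Set.Icc 1 k) : rankNum w p k = w⁻¹ p := by
  simpa [rankNum] using card_filter_le_apply_of_strictMonoOn hG.strictMonoOn_Icc_left hp

theorem mem_Icc_left_iff_of_mem_permParabolic_SP (hu : u ∈ permParabolic (SP n k)) (i : ℕ) :
    u i ∈ Set.Icc 1 k ↔ i ∈ Set.Icc 1 k :=
  mem_Icc_iff_of_mem_permParabolic (a := 0) (fun h => by simp [SP] at h) (fun h => h.2.2 rfl) hu i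

theorem mem_Icc_right_iff_of_mem_permParabolic_SP (hu : u ∈ permParabolic (SP n k))
    (i : ℕ) : u i ∈ Set.Icc (k + 1) n ↔ i ∈ Set.Icc (k + 1) n :=
  mem_Icc_iff_of_mem_permParabolic (fun h => h.2.2 rfl) (fun h => by simp [SP] at h) hu i

theorem IsMaxRep.inv_apply_le_iff (hv : IsMaxRep (SP n k) w v) (p : ℕ) :
    v⁻¹ p ≤ k ↔ w⁻¹ p ≤ k := by
  obtain ⟨⟨u, hu, rfl⟩, -⟩ := hv
  simpa [mul_inv_rev] using le_iff_of_mem_permParabolic (fun h => h.2.2 rfl) (inv_mem hu) (w⁻¹ p)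

theorem IsMaxRep.lt_inv_apply_iff (hv : IsMaxRep (SP n k) w v) (p : ℕ) :
    k < v⁻¹ p ↔ k < w⁻¹ p :=
  not_le.symm.trans ((not_congr (hv.inv_apply_le_iff p)).trans not_le)

theorem IsMaxRep.rankNum_eq (hv : IsMaxRep (SP n k) w v) (p : ℕ) :
    rankNum v p k = rankNum w p k := by
  obtain ⟨⟨u, hu, rfl⟩, -⟩ := hv
  exact rankNum_mul_of_forall_mem_Icc_iff (mem_Icc_left_iff_of_mem_permParabolic_SP hu) p

theorem IsMaxRep.eq_of_lt_apply_add_one (hv : IsMaxRep (SP n k) w v) {q : ℕ} (hq1 : 1 ≤ q)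
    (hqn : q < n) (hq : v q < v (q + 1)) : q = k := by
  by_contra hqk
  exact (hv.2 q ⟨hq1, hqn, hqk⟩).not_gt hq

theorem IsMaxRep.apply_eq_apply_one (hk1 : 1 ≤ k) (hkn : k < n) (hG : IsGrassmannian n k w)
    (hv : IsMaxRep (SP n k) w v) : v k = w 1 := by
  obtain ⟨⟨u, hu, rfl⟩, hdesc⟩ := hv
  refine apply_right_eq_of_antitoneOn_comp hk1 (mem_Icc_left_iff_of_mem_permParabolic_SP hu)
    hG.strictMonoOn_Icc_left.monotoneOn (antitoneOn_Icc_of_lt fun j hj hjk => ?_)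
  exact hdesc j ⟨hj, by omega, by omega⟩

theorem IsMaxRep.apply_add_one_eq_apply (hkn : k < n) (hG : IsGrassmannian n k w)
    (hv : IsMaxRep (SP n k) w v) : v (k + 1) = w n := by
  obtain ⟨⟨u, hu, rfl⟩, hdesc⟩ := hv
  refine apply_left_eq_of_antitoneOn_comp hkn (mem_Icc_right_iff_of_mem_permParabolic_SP hu)
    hG.strictMonoOn_Icc_right.monotoneOn (antitoneOn_Icc_of_lt fun j hkj hjn => ?_)
  exact hdesc j ⟨by omega, hjn, by omega⟩

end Grassmannian

/-- Let `w ∈ S_n` be a Grassmannian permutation with unique descent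
at `k`, and let `v = v_P(w) = w·w₀^P` be the maximal representative of `w·W_P` (where
`W_P = S_k × S_{n-k}`).  Then `Coess(v) = {(i,k) : w⁻¹(i) ≤ k < w⁻¹(i+1)}`, and for
each such pair the rank number `r_{i,k}(v)` equals `w⁻¹(i)`. -/
theorem coess_of_maxRep_grassmannian
    (n k : ℕ) (w v : Equiv.Perm ℕ)
    (hk1 : 1 ≤ k) (hkn : k < n)
    (hG : IsGrassmannian n k w)
    (hv : IsMaxRep (SP n k) w v) :
    Coess n v = {pq | ∃ i, 1 ≤ i ∧ i < n ∧
        w⁻¹ i ≤ k ∧ k < w⁻¹ (i + 1) ∧ pq = (i, k)} ∧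
    (∀ i, 1 ≤ i → i < n → w⁻¹ i ≤ k → k < w⁻¹ (i + 1) →
        rankNum v i k = w⁻¹ i) := by
  refine ⟨?_, fun i hi1 hin hik _ => ?_⟩
  · ext ⟨p, q⟩
    simp only [Coess, Set.mem_ofPred_eq, Prod.mk.injEq]
    constructor
    · rintro ⟨hp1, hpn, hq1, hqn, hpq, hpq', hvq, hvq'⟩
      obtain rfl := hv.eq_of_lt_apply_add_one hq1 hqn (hvq.trans_lt hvq')
      exact ⟨p, hp1, hpn, (hv.inv_apply_le_iff p).1 hpq, (hv.lt_inv_apply_iff _).1 hpq',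
        rfl, rfl⟩
    · rintro ⟨_, hp1, hpn, hpk, hkp, rfl, hq⟩
      subst q
      have hp := hG.inv_apply_mem_Icc ⟨hp1, hpn.le⟩
      have hp' := hG.inv_apply_mem_Icc ⟨by omega, hpn⟩
      refine ⟨hp1, hpn, hk1, hkn, (hv.inv_apply_le_iff p).2 hpk,
        (hv.lt_inv_apply_iff _).2 hkp, ?_, ?_⟩
      · rw [hv.apply_eq_apply_one hk1 hkn hG]
        simpa using hG.strictMonoOn_Icc_left.monotoneOn ⟨le_rfl, hk1⟩ ⟨hp.1, hpk⟩ hp.1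
      · rw [hv.apply_add_one_eq_apply hkn hG]
        simpa using hG.strictMonoOn_Icc_right.monotoneOn ⟨hkp, hp'.2⟩ ⟨hkn, le_rfl⟩ hp'.2
  · rw [hv.rankNum_eq, hG.rankNum_inv_apply ⟨(hG.inv_apply_mem_Icc ⟨hi1, hin.le⟩).1, hik⟩]
end

section
/- Let w ∈ S_n be a non-identity Grassmannian permutation with unique descent at k, and Q the parabolic generated by Δ_w = {α_j : w(j+1)=w(j)+1, j ≠ k}. Let v_Q(w) denote the maximal coset representative of wW_Q. Then Coess(v_Q(w)) = A ∪ B where A = {(i, w⁻¹(i)) : w⁻¹(i) < k < w⁻¹(i+1)} and B = {(i, w⁻¹(i+1) − 1) : w⁻¹(i) < k+1 < w⁻¹(i+1)}. -/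
open Equiv

/-! Write `v = w u` with `u ∈ W_Q`. Since `u` preserves every initial segment `[0, j]` with
`j ∉ Δ_w`, and `v` decreases along every run of positions in `Δ_w`, `v⁻¹` reverses each pair of
consecutive values `p, p + 1` that `w⁻¹` places inside one block of `w`, and also a pair with
`w⁻¹ (p + 1) ≤ k < w⁻¹ p`. A coessential `(p, q)` needs `v⁻¹ p < v⁻¹ (p + 1)`, hence
`w⁻¹ p ≤ k < w⁻¹ (p + 1)`. For such `p` we get `v⁻¹ p ≤ w⁻¹ p` and `w⁻¹ (p + 1) ≤ v⁻¹ (p + 1)`,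
and the positions where `v ≤ p` are exactly `[1, w⁻¹ p] ∪ (k, w⁻¹ (p + 1))`. The right ends `q`
of the maximal intervals of this set are `w⁻¹ p` when `w⁻¹ p < k` and `w⁻¹ (p + 1) - 1` when
`k + 1 < w⁻¹ (p + 1)`; the remaining case `w⁻¹ p = k`, `w⁻¹ (p + 1) = k + 1` contradicts the
descent of `w` at `k`. -/

open Set

lemma apply_le_iff_of_mem_permParabolic {S : Set ℕ} {u : Perm ℕ} (hu : u ∈ permParabolic S)
    {j : ℕ} (hj : j ∉ S) (m : ℕ) : u m ≤ j ↔ m ≤ j := by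
  induction hu using Subgroup.closure_induction generalizing m with
  | mem g hg =>
    obtain ⟨i, hiS, rfl⟩ := hg
    have hij : i ≠ j := fun h => hj (h ▸ hiS)
    rcases eq_or_ne m i with rfl | h1
    · rw [swap_apply_left]; omega
    rcases eq_or_ne m (i + 1) with rfl | h2
    · rw [swap_apply_right]; omega
    · rw [swap_apply_of_ne_of_ne h1 h2]
  | one => rfl
  | mul g h _ _ ihg ihh => rw [Perm.mul_apply, ihg, ihh]
  | inv g _ ih => rw [← ih, Perm.coe_inv, apply_symm_apply]

section IsMaxRep
variable {S : Set ℕ} {w v : Perm ℕ}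

lemma IsMaxRep.inv_apply_lt_of_mem (hv : IsMaxRep S w v) {x : ℕ} (hx : x ∈ S)
    (hw : w x < w (x + 1)) : v⁻¹ (w (x + 1)) < v⁻¹ (w x) := by
  obtain ⟨⟨u, hu, rfl⟩, hdesc⟩ := hv
  simp only [mul_inv_rev, Perm.mul_apply, Perm.coe_inv, symm_apply_apply]
  by_contra! hle
  have hlt : u.symm x < u.symm (x + 1) := hle.lt_of_ne (by simp)
  -- a position `j ∉ S` between the two would force `x ≤ j < x + 1`
  have hS : ∀ j ∈ Icc (u.symm x) (u.symm (x + 1)), j + 1 ∈ Icc (u.symm x) (u.symm (x + 1)) →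
      j ∈ S := by
    intro j hj hj1
    by_contra hjS
    have h1 := apply_le_iff_of_mem_permParabolic hu hjS (u.symm x)
    have h2 := apply_le_iff_of_mem_permParabolic hu hjS (u.symm (x + 1))
    simp only [apply_symm_apply] at h1 h2
    obtain rfl : j = x := by simp only [mem_Icc] at hj hj1; omega
    exact hjS hx
  have hanti : StrictAntiOn (w * u) (Icc (u.symm x) (u.symm (x + 1))) :=
    strictAntiOn_of_add_one_lt ordConnected_Icc fun j _ hj hj1 => hdesc j (hS j hj hj1)
  have := hanti (left_mem_Icc.2 hlt.le) (right_mem_Icc.2 hlt.le) hlt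
  simp only [Perm.mul_apply, apply_symm_apply] at this
  exact lt_asymm hw this

lemma IsMaxRep.inv_apply_le_of_notMem (hv : IsMaxRep S w v) {x : ℕ} (hx : x ∉ S) :
    v⁻¹ (w x) ≤ x := by
  obtain ⟨⟨u, hu, rfl⟩, -⟩ := hv
  simpa [mul_inv_rev] using (apply_le_iff_of_mem_permParabolic (inv_mem hu) hx x).2 le_rfl

lemma IsMaxRep.le_inv_apply_of_notMem (hv : IsMaxRep S w v) {y : ℕ} (hy : y - 1 ∉ S) :
    y ≤ v⁻¹ (w y) := by
  obtain ⟨⟨u, hu, rfl⟩, -⟩ := hv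
  have := apply_le_iff_of_mem_permParabolic (inv_mem hu) hy y
  simp only [mul_inv_rev, Perm.mul_apply, Perm.coe_inv, symm_apply_apply] at this ⊢
  omega

end IsMaxRep

lemma mem_of_apply_mem_of_forall_notMem_eq {α : Type*} {s : Set α} {w : Perm α}
    (h : ∀ i ∉ s, w i = i) {x : α} (hx : w x ∈ s) : x ∈ s := by
  by_contra hxs
  rw [h x hxs] at hx
  exact hxs hx

lemma StrictMonoOn.eq_add_one_of_apply_eq_add_one {f : ℕ → ℕ} {s : Set ℕ}
    (hf : StrictMonoOn f s) (hs : s.OrdConnected) {x y : ℕ} (hx : x ∈ s) (hy : y ∈ s)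
    (h : f y = f x + 1) : y = x + 1 := by
  have hxy : x < y := (hf.lt_iff_lt hx hy).1 (by omega)
  by_contra hne
  have hx1 : x + 1 ∈ s := hs.out hx hy ⟨by omega, by omega⟩
  have := hf hx hx1 (by omega)
  have := hf hx1 hy (by omega)
  omega

section Crossing
variable {n k x y : ℕ} {w : Perm ℕ}

lemma notMem_deltaW_left (hwy : w y = w x + 1) (hxk : x ≤ k) (hky : k < y) :
    x ∉ DeltaW n k w := by
  rintro ⟨-, -, hxk', hsucc⟩
  have : y = x + 1 := w.injective (by rw [hwy, hsucc])
  omega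

lemma notMem_deltaW_right (hwy : w y = w x + 1) (hxk : x ≤ k) (hky : k < y) :
    y - 1 ∉ DeltaW n k w := by
  rintro ⟨-, -, hk', hsucc⟩
  rw [Nat.sub_add_cancel (by omega : 1 ≤ y)] at hsucc
  have : y - 1 = x := w.injective (by omega)
  omega

end Crossing

namespace IsGrassmannian
variable {n k x y q : ℕ} {w v : Perm ℕ}

lemma strictMonoOn_left (hG : IsGrassmannian n k w) : StrictMonoOn w (Icc 1 k) :=
  fun _ hi _ hj hij => hG.2.1 _ _ hi.1 hij hj.2

lemma strictMonoOn_right (hG : IsGrassmannian n k w) : StrictMonoOn w (Icc (k + 1) n) :=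
  fun _ hi _ hj hij => hG.2.2.1 _ _ hi.1 hij hj.2

lemma mem_Icc_of_apply_mem_Icc (hG : IsGrassmannian n k w) (hx : w x ∈ Icc 1 n) :
    x ∈ Icc 1 n :=
  mem_of_apply_mem_of_forall_notMem_eq hG.1 hx

lemma le_and_lt_of_isMaxRep (hG : IsGrassmannian n k w) (hv : IsMaxRep (DeltaW n k w) w v)
    (hx : x ∈ Icc 1 n) (hy : y ∈ Icc 1 n) (hwy : w y = w x + 1)
    (hlt : v⁻¹ (w x) < v⁻¹ (w y)) : x ≤ k ∧ k < y := by
  -- consecutive values inside one block of `w` sit at a position of `Δ_w`, which `v⁻¹` reverses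
  have same_block (hyx : y = x + 1) (hk : x ≠ k) : False := by
    subst hyx
    have hmem : x ∈ DeltaW n k w := ⟨hx.1, hy.2, hk, hwy⟩
    exact lt_asymm hlt (hv.inv_apply_lt_of_mem hmem (by omega))
  by_contra hcross
  rcases le_or_gt x k with hxk | hxk
  · have hyx := hG.strictMonoOn_left.eq_add_one_of_apply_eq_add_one ordConnected_Icc
      ⟨hx.1, hxk⟩ ⟨hy.1, by omega⟩ hwy
    exact same_block hyx (by omega)
  rcases le_or_gt y k with hyk | hyk
  · obtain ⟨⟨u, hu, rfl⟩, -⟩ := hv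
    have hkS : k ∉ DeltaW n k w := fun h => h.2.2.1 rfl
    have hux := apply_le_iff_of_mem_permParabolic (inv_mem hu) hkS x
    have huy := apply_le_iff_of_mem_permParabolic (inv_mem hu) hkS y
    simp only [mul_inv_rev, Perm.mul_apply, Perm.coe_inv, symm_apply_apply] at hlt hux huy
    omega
  · have hyx := hG.strictMonoOn_right.eq_add_one_of_apply_eq_add_one ordConnected_Icc
      ⟨hxk, hx.2⟩ ⟨hyk, hy.2⟩ hwy
    exact same_block hyx (by omega)

lemma apply_le_iff_of_isMaxRep (hG : IsGrassmannian n k w) (hv : IsMaxRep (DeltaW n k w) w v)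
    (hx : x ∈ Icc 1 k) (hy : y ∈ Icc (k + 1) n) (hwy : w y = w x + 1) {m : ℕ}
    (hm : m ∈ Icc 1 n) : v m ≤ w x ↔ m ≤ x ∨ k < m ∧ m < y := by
  obtain ⟨⟨u, hu, rfl⟩, -⟩ := hv
  have pres (j : ℕ) (hj : j ∉ DeltaW n k w) := apply_le_iff_of_mem_permParabolic hu hj m
  have hu0 := pres 0 fun h => by simpa using h.1
  have hun := pres n fun h => lt_irrefl n h.2.1
  have huk := pres k fun h => h.2.2.1 rfl
  have hux := pres x (notMem_deltaW_left hwy hx.2 hy.1)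
  have huy := pres (y - 1) (notMem_deltaW_right hwy hx.2 hy.1)
  obtain ⟨hm1, hmn⟩ := hm
  have hxk := hx.2
  rw [Perm.mul_apply]
  rcases le_or_gt m k with hmk | hmk
  · have := hG.strictMonoOn_left.le_iff_le (a := u m) ⟨by omega, by omega⟩ hx
    omega
  · have := hG.strictMonoOn_right.lt_iff_lt (a := u m) ⟨by omega, by omega⟩ hy
    omega

lemma mem_coess_iff (hG : IsGrassmannian n k w) (hv : IsMaxRep (DeltaW n k w) w v)
    (hp1 : 1 ≤ w x) (hpn : w x < n) (hwy : w y = w x + 1) :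
    (w x, q) ∈ Coess n v ↔ x < k ∧ k < y ∧ q = x ∨ x < k + 1 ∧ k + 1 < y ∧ q = y - 1 := by
  obtain ⟨hx1, hxn⟩ := hG.mem_Icc_of_apply_mem_Icc ⟨hp1, hpn.le⟩
  obtain ⟨hy1, hyn⟩ := hG.mem_Icc_of_apply_mem_Icc (x := y) ⟨by omega, by omega⟩
  simp only [Coess, mem_ofPred_eq, ← hwy]
  by_cases hcross : x ≤ k ∧ k < y
  swap
  · have := hG.le_and_lt_of_isMaxRep hv ⟨hx1, hxn⟩ ⟨hy1, hyn⟩ hwy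
    omega
  obtain ⟨hxk, hky⟩ := hcross
  have hvx := hv.inv_apply_le_of_notMem (notMem_deltaW_left hwy hxk hky)
  have hvy := hv.le_inv_apply_of_notMem (notMem_deltaW_right hwy hxk hky)
  have hchar (m : ℕ) (h1 : 1 ≤ m) (h2 : m ≤ n) :=
    hG.apply_le_iff_of_isMaxRep hv ⟨hx1, hxk⟩ ⟨hky, hyn⟩ hwy ⟨h1, h2⟩
  have hq := hchar q
  have hq1 := hchar (q + 1)
  have hdesc_k : ¬(x = k ∧ y = k + 1) := by
    rintro ⟨rfl, rfl⟩
    have := hG.2.2.2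
    omega
  omega

end IsGrassmannian

theorem coess_of_maxRep_Q_general
    (n k : ℕ) (w v : Equiv.Perm ℕ)
    (hG : IsGrassmannian n k w)
    (hv : IsMaxRep (DeltaW n k w) w v) :
    Coess n v =
      {pq | ∃ i, 1 ≤ i ∧ i < n ∧
          w⁻¹ i < k ∧ k < w⁻¹ (i + 1) ∧ pq = (i, w⁻¹ i)} ∪
      {pq | ∃ i, 1 ≤ i ∧ i < n ∧
          w⁻¹ i < k + 1 ∧ k + 1 < w⁻¹ (i + 1) ∧ pq = (i, w⁻¹ (i + 1) - 1)} := by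
  have hinv (z : ℕ) : w⁻¹ (w z) = z := Perm.inv_eq_iff_eq.2 rfl
  ext ⟨p, q⟩
  simp only [mem_union, mem_ofPred_eq, Prod.mk.injEq, existsAndEq, true_and]
  by_cases hp : 1 ≤ p ∧ p < n
  · obtain ⟨x, rfl⟩ := w.surjective p
    obtain ⟨y, hwy⟩ := w.surjective (w x + 1)
    rw [hG.mem_coess_iff hv hp.1 hp.2 hwy, ← hwy, hinv, hinv]
    tauto
  · simp only [Coess, mem_ofPred_eq]
    tauto

/-- Let `w ∈ S_n` be a non-identity Grassmannian permutation with
unique descent at `k`, `Q` the parabolic generated by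
`Δ_w = {α_j : w(j+1) = w(j)+1, j ≠ k}`, and `v = v_Q(w)` the maximal representative of
`w·W_Q`.  Then `Coess(v_Q(w)) = A ∪ B` where
`A = {(i, w⁻¹(i)) : w⁻¹(i) < k < w⁻¹(i+1)}` and
`B = {(i, w⁻¹(i+1) − 1) : w⁻¹(i) < k+1 < w⁻¹(i+1)}`. -/
theorem coess_of_maxRep_Q
    (n k : ℕ) (w v : Equiv.Perm ℕ)
    (hk1 : 1 ≤ k) (hkn : k < n)
    (hG : IsGrassmannian n k w) (hne : w ≠ 1)
    (hv : IsMaxRep (DeltaW n k w) w v) :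
    Coess n v =
      {pq | ∃ i, 1 ≤ i ∧ i < n ∧
          w⁻¹ i < k ∧ k < w⁻¹ (i + 1) ∧ pq = (i, w⁻¹ i)} ∪
      {pq | ∃ i, 1 ≤ i ∧ i < n ∧
          w⁻¹ i < k + 1 ∧ k + 1 < w⁻¹ (i + 1) ∧ pq = (i, w⁻¹ (i + 1) - 1)} :=
  coess_of_maxRep_Q_general n k w v hG hv
end

section
/- Let w ∈ S_n be Grassmannian with unique descent at k. If the coessential set of v_P(w) contains two boxes (p_i,k) and (p_j,k), i < j, neither of which is an inclusion box, then the permutation v_Q(w) is not covexillary: its coessential set contains boxes (p,q) and (p',q') with p < p' and q > q'. -/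
open Equiv

/-- `(p, k)` is a coessential box of `v_P(w)`, i.e. `w⁻¹(p) ≤ k < w⁻¹(p+1)`. -/
def IsCoessBox (n k : ℕ) (w : Equiv.Perm ℕ) (p : ℕ) : Prop :=
  1 ≤ p ∧ p < n ∧ w⁻¹ p ≤ k ∧ k < w⁻¹ (p + 1)

/-!
Write `v = w u` with `u` in the parabolic subgroup generated by the transpositions `(j, j+1)`,
`j ∈ Δ_w`. Every function `f` with `f (j+1) = f j` for `j ∈ Δ_w` is `u`-invariant. Applied to
`x ↦ [x ≤ q]` for `q ∉ Δ_w`, and to `x ↦ w x - x` (constant across `Δ_w` by definition of `Δ_w`),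
this shows that a coessential box `(p, q)` of `w` with `q ∉ Δ_w` is also one of `v`.

For a non-inclusion box `(p, k)` with `r = w⁻¹ p` we have `r < p` and `r < k`. Counting the values
`≤ p` of the Grassmannian `w` gives `w⁻¹ (p+1) = k + p - r + 1`, and from this both `(p, r)` and
`(p, k + p - r)` are coessential boxes of `w` at positions outside `Δ_w`. The boxes
`(p_i, k + p_i - r_i)` and `(p_j, r_j)` of `v` then form the forbidden pattern, as
`r_j < k < k + p_i - r_i`.
-/

section Parabolic

variable {S : Set ℕ} {u : Perm ℕ}

theorem apply_apply_eq_of_mem_permParabolic {α : Type*} {f : ℕ → α}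
    (hf : ∀ j ∈ S, f (j + 1) = f j) (hu : u ∈ permParabolic S) (x : ℕ) : f (u x) = f x := by
  induction hu using Subgroup.closure_induction generalizing x with
  | mem g hg =>
    obtain ⟨j, hj, rfl⟩ := hg
    rw [swap_apply_def]
    split_ifs with h₁ h₂
    · rw [h₁, hf j hj]
    · rw [h₂, hf j hj]
    · rfl
  | one => rfl
  | mul a b _ _ iha ihb => exact (iha (b x)).trans (ihb x)
  | inv a _ iha => simpa using (iha (a⁻¹ x)).symm

theorem apply_le_iff_of_mem_permParabolic_s16 {q : ℕ} (hu : u ∈ permParabolic S) (hq : q ∉ S)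
    (x : ℕ) : u x ≤ q ↔ x ≤ q := by
  refine eq_iff_iff.mp (apply_apply_eq_of_mem_permParabolic (f := (· ≤ q)) ?_ hu x)
  intro j hj
  have hjq : j ≠ q := fun h => hq (h ▸ hj)
  exact propext ⟨fun h => by omega, fun h => by omega⟩

theorem apply_apply_add_eq_of_mem_permParabolic {w : Perm ℕ}
    (hS : ∀ j ∈ S, w (j + 1) = w j + 1) (hu : u ∈ permParabolic S) (x : ℕ) :
    w (u x) + x = w x + u x := by
  have h := apply_apply_eq_of_mem_permParabolic (f := fun y => (w y : ℤ) - y)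
    (fun j hj => by simp only [hS j hj]; push_cast; ring) hu x
  omega

theorem mem_coess_mul_of_mem_coess {n p q : ℕ} {w : Perm ℕ}
    (hS : ∀ j ∈ S, w (j + 1) = w j + 1) (hu : u ∈ permParabolic S) (hq : q ∉ S)
    (h : (p, q) ∈ Coess n w) : (p, q) ∈ Coess n (w * u) := by
  simp only [Coess, Set.mem_ofPred_eq] at h ⊢
  obtain ⟨hp1, hpn, hq1, hqn, hinv, hinv_succ, happ, happ_succ⟩ := h
  have hmul_inv (m : ℕ) : (w * u)⁻¹ m = u⁻¹ (w⁻¹ m) := by rw [mul_inv_rev]; rfl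
  have hu_inv := (permParabolic S).inv_mem hu
  have hblock := apply_le_iff_of_mem_permParabolic_s16 hu hq
  have hblock_inv := apply_le_iff_of_mem_permParabolic_s16 hu_inv hq
  have hrun := apply_apply_add_eq_of_mem_permParabolic hS hu
  refine ⟨hp1, hpn, hq1, hqn, ?_, ?_, ?_, ?_⟩
  · rwa [hmul_inv, hblock_inv]
  · rwa [hmul_inv, ← not_le, hblock_inv, not_le]
  · have := hblock q; have := hrun q
    simp only [Perm.mul_apply]; omega
  · have := hblock (q + 1); have := hrun (q + 1)
    simp only [Perm.mul_apply]; omega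

end Parabolic

theorem IsCoessBox.inv_notMem_deltaW {n k p : ℕ} {w : Perm ℕ} (hb : IsCoessBox n k w p) :
    w⁻¹ p ∉ DeltaW n k w := by
  rintro ⟨-, -, hk, hsucc⟩
  have : w⁻¹ (p + 1) = w⁻¹ p + 1 := by
    rw [Perm.inv_eq_iff_eq, hsucc]; simp
  have := hb.2.2
  omega

namespace IsGrassmannian

variable {n k : ℕ} {w : Perm ℕ} (hG : IsGrassmannian n k w)
include hG

theorem apply_mem_Icc_iff (x : ℕ) : w x ∈ Set.Icc 1 n ↔ x ∈ Set.Icc 1 n := by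
  by_cases hx : x ∈ Set.Icc 1 n
  · refine iff_of_true ?_ hx
    by_contra hwx
    exact hwx ((w.injective (hG.1 _ hwx)).symm ▸ hx)
  · rw [hG.1 x hx]

theorem inv_mem_Icc_iff (y : ℕ) : w⁻¹ y ∈ Set.Icc 1 n ↔ y ∈ Set.Icc 1 n := by
  rw [← hG.apply_mem_Icc_iff]; simp

theorem strictMonoOn_Iic : StrictMonoOn w (Set.Iic k) := by
  intro i hi j hj hij
  rcases Nat.eq_zero_or_pos i with rfl | hi0
  · have hw0 : w 0 = 0 := hG.1 0 (by simp)
    have : w j ≠ 0 := fun h => hij.ne' (w.injective (h.trans hw0.symm))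
    omega
  · exact hG.2.1 i j hi0 hij hj

theorem strictMonoOn_Icc : StrictMonoOn w (Set.Icc (k + 1) n) :=
  fun i hi j hj hij => hG.2.2.1 i j hi.1 hij hj.2

theorem le_apply {x : ℕ} (hx : x ≤ k) : x ≤ w x :=
  hG.strictMonoOn_Iic.Iic_id_le x hx

variable {p : ℕ} (hb : IsCoessBox n k w p)
include hb

theorem one_le_inv_and_inv_succ_le : 1 ≤ w⁻¹ p ∧ w⁻¹ (p + 1) ≤ n := by
  obtain ⟨hp1, hpn, -, -⟩ := hb
  exact ⟨((hG.inv_mem_Icc_iff p).2 ⟨hp1, hpn.le⟩).1,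
    ((hG.inv_mem_Icc_iff (p + 1)).2 ⟨by omega, hpn⟩).2⟩

theorem inv_lt_of_ne_min (hni : w⁻¹ p ≠ min p k) : w⁻¹ p < p ∧ w⁻¹ p < k := by
  have hr : w (w⁻¹ p) = p := w.apply_symm_apply p
  have := hG.le_apply hb.2.2.1
  have := hb.2.2.1
  omega

theorem one_le_apply_and_apply_le_iff (x : ℕ) :
    1 ≤ w x ∧ w x ≤ p ↔ (1 ≤ x ∧ x ≤ w⁻¹ p) ∨ (k + 1 ≤ x ∧ x < w⁻¹ (p + 1)) := by
  obtain ⟨hr1, hsn⟩ := hG.one_le_inv_and_inv_succ_le hb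
  obtain ⟨hp1, hpn, hrk, hks⟩ := hb
  have hr : w (w⁻¹ p) = p := w.apply_symm_apply p
  have hs : w (w⁻¹ (p + 1)) = p + 1 := w.apply_symm_apply (p + 1)
  by_cases hx : x ∈ Set.Icc 1 n
  · have hwx := (hG.apply_mem_Icc_iff x).2 hx
    rcases le_or_gt x k with hxk | hxk
    · have := hG.strictMonoOn_Iic.le_iff_le (a := x) (b := w⁻¹ p) hxk hrk
      rw [hr] at this
      simp only [Set.mem_Icc] at hx hwx
      omega
    · have := hG.strictMonoOn_Icc.lt_iff_lt (a := x) (b := w⁻¹ (p + 1))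
        ⟨hxk, hx.2⟩ ⟨hks, hsn⟩
      rw [hs] at this
      simp only [Set.mem_Icc] at hx hwx
      omega
  · rw [hG.1 x hx]
    simp only [Set.mem_Icc] at hx
    omega

theorem inv_add_inv_succ : w⁻¹ p + w⁻¹ (p + 1) = k + p + 1 := by
  have hrk := hb.2.2.1
  have hks := hb.2.2.2
  have hpreimage : (Finset.Icc 1 p).map w.symm.toEmbedding =
      Finset.Icc 1 (w⁻¹ p) ∪ Finset.Ico (k + 1) (w⁻¹ (p + 1)) := by
    ext x
    simp only [Finset.mem_map_equiv, symm_symm, Finset.mem_union, Finset.mem_Icc,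
      Finset.mem_Ico]
    exact hG.one_le_apply_and_apply_le_iff hb x
  have hcard := congrArg Finset.card hpreimage
  rw [Finset.card_map, Finset.card_union_of_disjoint, Nat.card_Icc, Nat.card_Icc,
    Nat.card_Ico] at hcard
  · omega
  · exact Finset.disjoint_left.2 fun x hx hx' => by
      simp only [Finset.mem_Icc, Finset.mem_Ico] at hx hx'
      omega

theorem mem_coess_inv (hrk : w⁻¹ p < k) : (p, w⁻¹ p) ∈ Coess n w := by
  obtain ⟨hr1, hsn⟩ := hG.one_le_inv_and_inv_succ_le hb
  obtain ⟨hp1, hpn, -, hks⟩ := hb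
  have hr : w (w⁻¹ p) = p := w.apply_symm_apply p
  have := hG.strictMonoOn_Iic (a := w⁻¹ p) (b := w⁻¹ p + 1) hrk.le hrk (by omega)
  simp only [Coess, Set.mem_ofPred_eq]
  refine ⟨hp1, hpn, hr1, by omega, le_rfl, by omega, hr.le, by omega⟩

theorem mem_coess_add (hrp : w⁻¹ p < p) : (p, k + p - w⁻¹ p) ∈ Coess n w := by
  have hsum := hG.inv_add_inv_succ hb
  obtain ⟨hr1, hsn⟩ := hG.one_le_inv_and_inv_succ_le hb
  obtain ⟨hp1, hpn, hrk, hks⟩ := hb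
  have hs : w (w⁻¹ (p + 1)) = p + 1 := w.apply_symm_apply (p + 1)
  have hq : k + p - w⁻¹ p + 1 = w⁻¹ (p + 1) := by omega
  have := hG.strictMonoOn_Icc (a := k + p - w⁻¹ p) (b := w⁻¹ (p + 1))
    ⟨by omega, by omega⟩ ⟨by omega, hsn⟩ (by omega)
  simp only [Coess, Set.mem_ofPred_eq]
  refine ⟨hp1, hpn, by omega, by omega, by omega, by omega, by omega, ?_⟩
  rw [hq, hs]
  omega

theorem add_notMem_deltaW (hrp : w⁻¹ p < p) : k + p - w⁻¹ p ∉ DeltaW n k w := by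
  rintro ⟨-, -, -, hsucc⟩
  have hsum := hG.inv_add_inv_succ hb
  have hq : k + p - w⁻¹ p + 1 = w⁻¹ (p + 1) := by omega
  have hs : w (w⁻¹ (p + 1)) = p + 1 := w.apply_symm_apply (p + 1)
  rw [hq, hs, add_left_inj, ← Perm.inv_eq_iff_eq] at hsucc
  have := hb.2.2.1
  omega

end IsGrassmannian

theorem two_non_inclusion_boxes_implies_not_covexillary_general
    (n k : ℕ) (w v : Equiv.Perm ℕ)
    (hG : IsGrassmannian n k w)
    (hv : IsMaxRep (DeltaW n k w) w v)
    (pi pj : ℕ) (hij : pi < pj)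
    (hbi : IsCoessBox n k w pi) (hbj : IsCoessBox n k w pj)
    (hnii : w⁻¹ pi ≠ min pi k) (hnij : w⁻¹ pj ≠ min pj k) :
    ∃ p q p' q', (p, q) ∈ Coess n v ∧ (p', q') ∈ Coess n v ∧
      p < p' ∧ q' < q := by
  obtain ⟨⟨u, hu, rfl⟩, -⟩ := hv
  have hstep : ∀ j ∈ DeltaW n k w, w (j + 1) = w j + 1 := fun j hj => hj.2.2.2
  obtain ⟨hri_p, -⟩ := hG.inv_lt_of_ne_min hbi hnii
  obtain ⟨-, hrj_k⟩ := hG.inv_lt_of_ne_min hbj hnij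
  refine ⟨pi, k + pi - w⁻¹ pi, pj, w⁻¹ pj, ?_, ?_, hij, by omega⟩
  · exact mem_coess_mul_of_mem_coess hstep hu (hG.add_notMem_deltaW hbi hri_p)
      (hG.mem_coess_add hbi hri_p)
  · exact mem_coess_mul_of_mem_coess hstep hu hbj.inv_notMem_deltaW (hG.mem_coess_inv hbj hrj_k)

/-- Let `w ∈ S_n` be Grassmannian with unique descent at `k`.  If the
coessential set of `v_P(w)` contains two boxes `(p_i, k)` and `(p_j, k)`, `p_i < p_j`,
neither of which is an inclusion box, then `v_Q(w)` is not covexillary: its coessential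
set contains boxes `(p, q)` and `(p', q')` with `p < p'` and `q > q'`. -/
theorem two_non_inclusion_boxes_implies_not_covexillary
    (n k : ℕ) (w v : Equiv.Perm ℕ)
    (hk1 : 1 ≤ k) (hkn : k < n)
    (hG : IsGrassmannian n k w)
    (hv : IsMaxRep (DeltaW n k w) w v)
    (pi pj : ℕ) (hij : pi < pj)
    (hbi : IsCoessBox n k w pi) (hbj : IsCoessBox n k w pj)
    (hnii : w⁻¹ pi ≠ min pi k) (hnij : w⁻¹ pj ≠ min pj k) :
    ∃ p q p' q', (p, q) ∈ Coess n v ∧ (p', q') ∈ Coess n v ∧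
      p < p' ∧ q' < q :=
  two_non_inclusion_boxes_implies_not_covexillary_general n k w v hG hv pi pj hij hbi hbj hnii hnij
end
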